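/- Progress at type Idx: if ⊢ M : Idx is derivable for a closed qPCF term M and M ⇓¹ N, then N is a numeral n̄. -/

import Mathlib

set_option maxHeartbeats 1000000

namespace QPCF

-- qPCF terms and types, mutually defined (types contain index terms in `circ`).
mutual
inductive Tm : Type
  | var : ℕ → Tm
  | lam : ℕ → Ty → Tm → Tm
  | app : Tm → Tm → Tm
  | num : ℕ → Tm
  | predOp : Tm
  | succOp : Tm
  | ifOp : Tm
  | fix : Ty → Tm
  | setOp : Tm
  | getOp : Tm
  | gate : ℕ → ℕ → Tm      -- `gate u k` : gate named `u` in 𝒰(k), i.e. of arity k+1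
  | seqOp : Tm              -- sequential composition ∶
  | parOp : Tm              -- parallel composition ∥
  | iterOp : Tm
  | revOp : Tm
  | add : Tm → Tm → Tm      -- index operation +
  | mul : Tm → Tm → Tm      -- index operation *
  | size : Tm → Tm
  | dmeasOp : Tm

inductive Ty : Type
  | nat : Ty
  | idx : Ty
  | circ : Tm → Ty
  | arrow : Ty → Ty → Ty    -- σ → τ  (abbreviation for Πx^σ.τ with x not free in τ)
  | pi : ℕ → Ty → Ty → Ty
end

-- Substitution of term `N` for variable `x` in terms and in types.
mutual
def substTm : Tm → ℕ → Tm → Tm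
  | Tm.var y, x, N => if y = x then N else Tm.var y
  | Tm.lam y σ M, x, N => Tm.lam y (substTy σ x N) (if y = x then M else substTm M x N)
  | Tm.app M₁ M₂, x, N => Tm.app (substTm M₁ x N) (substTm M₂ x N)
  | Tm.num n, _, _ => Tm.num n
  | Tm.predOp, _, _ => Tm.predOp
  | Tm.succOp, _, _ => Tm.succOp
  | Tm.ifOp, _, _ => Tm.ifOp
  | Tm.fix σ, x, N => Tm.fix (substTy σ x N)
  | Tm.setOp, _, _ => Tm.setOp
  | Tm.getOp, _, _ => Tm.getOp
  | Tm.gate u k, _, _ => Tm.gate u k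
  | Tm.seqOp, _, _ => Tm.seqOp
  | Tm.parOp, _, _ => Tm.parOp
  | Tm.iterOp, _, _ => Tm.iterOp
  | Tm.revOp, _, _ => Tm.revOp
  | Tm.add E₀ E₁, x, N => Tm.add (substTm E₀ x N) (substTm E₁ x N)
  | Tm.mul E₀ E₁, x, N => Tm.mul (substTm E₀ x N) (substTm E₁ x N)
  | Tm.size M, x, N => Tm.size (substTm M x N)
  | Tm.dmeasOp, _, _ => Tm.dmeasOp

def substTy : Ty → ℕ → Tm → Ty
  | Ty.nat, _, _ => Ty.nat
  | Ty.idx, _, _ => Ty.idx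
  | Ty.circ E, x, N => Ty.circ (substTm E x N)
  | Ty.arrow σ τ, x, N => Ty.arrow (substTy σ x N) (substTy τ x N)
  | Ty.pi y σ τ, x, N => Ty.pi y (substTy σ x N) (if y = x then τ else substTy τ x N)
end

-- Free variables of terms and types.
mutual
def freeTm : Tm → Finset ℕ
  | Tm.var y => {y}
  | Tm.lam y σ M => freeTy σ ∪ (freeTm M \ {y})
  | Tm.app M₁ M₂ => freeTm M₁ ∪ freeTm M₂
  | Tm.num _ => ∅
  | Tm.predOp => ∅
  | Tm.succOp => ∅
  | Tm.ifOp => ∅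
  | Tm.fix σ => freeTy σ
  | Tm.setOp => ∅
  | Tm.getOp => ∅
  | Tm.gate _ _ => ∅
  | Tm.seqOp => ∅
  | Tm.parOp => ∅
  | Tm.iterOp => ∅
  | Tm.revOp => ∅
  | Tm.add E₀ E₁ => freeTm E₀ ∪ freeTm E₁
  | Tm.mul E₀ E₁ => freeTm E₀ ∪ freeTm E₁
  | Tm.size M => freeTm M
  | Tm.dmeasOp => ∅

def freeTy : Ty → Finset ℕ
  | Ty.nat => ∅
  | Ty.idx => ∅
  | Ty.circ E => freeTm E
  | Ty.arrow σ τ => freeTy σ ∪ freeTy τ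
  | Ty.pi y σ τ => freeTy σ ∪ (freeTy τ \ {y})
end

/-- Bases: finite lists of (variable, type) pairs. -/
abbrev Base := List (ℕ × Ty)

def dom (B : Base) : List ℕ := B.map Prod.fst
def codom (B : Base) : List Ty := B.map Prod.snd
def substBase (B : Base) (x : ℕ) (N : Tm) : Base := B.map fun p => (p.1, substTy p.2 x N)

/-- The function `surf`: collects the typings `B' ⊢ E : Idx` for all index
expressions `E` occurring in Circ-types inside a type. -/
def surfTy : Base → Ty → List (Base × Tm)
  | _, Ty.nat => []
  | _, Ty.idx => []
  | B, Ty.circ E => [(B, E)]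
  | B, Ty.arrow σ τ => surfTy B σ ++ surfTy B τ
  | B, Ty.pi x σ τ => surfTy B σ ++ surfTy ((x, σ) :: B) τ

/-- `surf` extended to a finite set (list) of types. -/
def surfList (B : Base) (l : List Ty) : List (Base × Tm) :=
  (l.map (surfTy B)).flatten

/-- Shape of types admissible for the fixpoint combinator: τ₁ → … → τₙ → γ
with γ ∈ {Nat, Circ E}. -/
inductive YShape : Ty → Prop
  | nat : YShape Ty.nat
  | circ (E : Tm) : YShape (Ty.circ E)
  | arrow (τ σ : Ty) : YShape σ → YShape (Ty.arrow τ σ)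

/-- The typing judgment of qPCF (Table 1). -/
inductive Judg : Base → Tm → Ty → Prop
  | var {B : Base} {x : ℕ} {σ : Ty} :
      (x, σ) ∈ B →
      (∀ p ∈ surfList B (codom B), Judg p.1 p.2 Ty.idx) →
      Judg B (Tm.var x) σ
  | lam {B : Base} {x : ℕ} {σ τ : Ty} {N : Tm} :
      x ∉ dom B → Judg ((x, σ) :: B) N τ →
      Judg B (Tm.lam x σ N) (Ty.pi x σ τ)
  | appPi {B : Base} {P Q : Tm} {x : ℕ} {σ τ : Ty} :
      Judg B P (Ty.pi x σ τ) → Judg B Q σ →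
      Judg B (Tm.app P Q) (substTy τ x Q)
  | appArrow {B : Base} {P Q : Tm} {σ τ : Ty} :
      Judg B P (Ty.arrow σ τ) → Judg B Q σ →
      Judg B (Tm.app P Q) τ
  | succ {B : Base} :
      (∀ p ∈ surfList B (codom B), Judg p.1 p.2 Ty.idx) →
      Judg B Tm.succOp (Ty.arrow Ty.nat Ty.nat)
  | pred {B : Base} :
      (∀ p ∈ surfList B (codom B), Judg p.1 p.2 Ty.idx) →
      Judg B Tm.predOp (Ty.arrow Ty.nat Ty.nat)
  | ifNat {B : Base} :
      (∀ p ∈ surfList B (codom B), Judg p.1 p.2 Ty.idx) →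
      Judg B Tm.ifOp (Ty.arrow Ty.nat (Ty.arrow Ty.nat (Ty.arrow Ty.nat Ty.nat)))
  | ifCirc {B : Base} {E : Tm} :
      Judg B E Ty.idx →
      Judg B Tm.ifOp (Ty.arrow Ty.nat (Ty.arrow (Ty.circ E) (Ty.arrow (Ty.circ E) (Ty.circ E))))
  | fix {B : Base} {σ : Ty} :
      YShape σ →
      (∀ p ∈ surfList B (σ :: codom B), Judg p.1 p.2 Ty.idx) →
      Judg B (Tm.fix σ) (Ty.arrow (Ty.arrow σ σ) σ)
  | get {B : Base} :
      (∀ p ∈ surfList B (codom B), Judg p.1 p.2 Ty.idx) →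
      Judg B Tm.getOp (Ty.arrow Ty.nat (Ty.arrow Ty.nat Ty.nat))
  | set {B : Base} :
      (∀ p ∈ surfList B (codom B), Judg p.1 p.2 Ty.idx) →
      Judg B Tm.setOp (Ty.arrow Ty.nat (Ty.arrow Ty.nat Ty.nat))
  | idxNat {B : Base} {M : Tm} :
      Judg B M Ty.idx → Judg B M Ty.nat
  | num {B : Base} {n : ℕ} :
      (∀ p ∈ surfList B (codom B), Judg p.1 p.2 Ty.idx) →
      Judg B (Tm.num n) Ty.idx
  | add {B : Base} {E₀ E₁ : Tm} :
      Judg B E₀ Ty.idx → Judg B E₁ Ty.idx → Judg B (Tm.add E₀ E₁) Ty.idx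
  | mul {B : Base} {E₀ E₁ : Tm} :
      Judg B E₀ Ty.idx → Judg B E₁ Ty.idx → Judg B (Tm.mul E₀ E₁) Ty.idx
  | size {B : Base} {M E : Tm} :
      Judg B M (Ty.circ E) → Judg B (Tm.size M) Ty.idx
  | gate {B : Base} {u k : ℕ} :
      (∀ p ∈ surfList B (codom B), Judg p.1 p.2 Ty.idx) →
      Judg B (Tm.gate u k) (Ty.circ (Tm.num k))
  | seqOp {B : Base} {E : Tm} :
      Judg B E Ty.idx →
      Judg B Tm.seqOp (Ty.arrow (Ty.circ E) (Ty.arrow (Ty.circ E) (Ty.circ E)))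
  | parOp {B : Base} {E₀ E₁ : Tm} :
      Judg B E₀ Ty.idx → Judg B E₁ Ty.idx →
      Judg B Tm.parOp (Ty.arrow (Ty.circ E₀) (Ty.arrow (Ty.circ E₁)
        (Ty.circ (Tm.add (Tm.add E₀ E₁) (Tm.num 1)))))
  | revOp {B : Base} {E : Tm} :
      Judg B E Ty.idx →
      Judg B Tm.revOp (Ty.arrow (Ty.circ E) (Ty.circ E))
  | iterOp {B : Base} {E₀ E₁ : Tm} {x : ℕ} :
      Judg B E₀ Ty.idx → Judg B E₁ Ty.idx →
      x ∉ dom B → x ∉ freeTm E₀ → x ∉ freeTm E₁ →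
      Judg B Tm.iterOp (Ty.pi x Ty.idx (Ty.arrow (Ty.circ E₀) (Ty.arrow (Ty.circ E₁)
        (Ty.circ (Tm.add E₀ (Tm.mul (Tm.add (Tm.num 1) E₁) (Tm.var x)))))))
  | dmeas {B : Base} {E : Tm} :
      Judg B E Ty.idx →
      Judg B Tm.dmeasOp (Ty.arrow Ty.nat (Ty.arrow (Ty.circ E) Ty.nat))

end QPCF
namespace QPCF

-- Syntactic sugar for applied operators.
def seqC (C₀ C₁ : Tm) : Tm := Tm.app (Tm.app Tm.seqOp C₀) C₁
def parC (C₀ C₁ : Tm) : Tm := Tm.app (Tm.app Tm.parOp C₀) C₁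
def ifC (M L R : Tm) : Tm := Tm.app (Tm.app (Tm.app Tm.ifOp M) L) R
def getC (M N : Tm) : Tm := Tm.app (Tm.app Tm.getOp M) N
def setC (M N : Tm) : Tm := Tm.app (Tm.app Tm.setOp M) N
def revC (M : Tm) : Tm := Tm.app Tm.revOp M
def iterC (E M₀ M₁ : Tm) : Tm := Tm.app (Tm.app (Tm.app Tm.iterOp E) M₀) M₁
def dmeasC (M N : Tm) : Tm := Tm.app (Tm.app Tm.dmeasOp M) N

/-- Iterated application M P₁ … Pₘ. -/
def apps : Tm → List Tm → Tm
  | t, [] => t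
  | t, p :: ps => apps (Tm.app t p) ps

/-- `parN n C₁ C₀` is `C₁ ∥ ⋯ ∥ C₁ ∥ C₀` with `n` copies of `C₁`. -/
def parN : ℕ → Tm → Tm → Tm
  | 0, _, C₀ => C₀
  | n + 1, C₁, C₀ => parC C₁ (parN n C₁ C₀)

/-- (Evaluated) circuits: strings built from gate names, ∶ and ∥. -/
inductive IsCircuit : Tm → Prop
  | gate (u k : ℕ) : IsCircuit (Tm.gate u k)
  | seq {C₀ C₁ : Tm} : IsCircuit C₀ → IsCircuit C₁ → IsCircuit (seqC C₀ C₁)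
  | par {C₀ C₁ : Tm} : IsCircuit C₀ → IsCircuit C₁ → IsCircuit (parC C₀ C₁)

/-- Parameters of the language: the unitary operator associated to each
gate name (of each arity), and the adjoint-renaming `‡` of gate names. -/
structure QParams where
  gU : (u k : ℕ) → Matrix (Fin (2 ^ (k + 1))) (Fin (2 ^ (k + 1))) ℂ
  adj : ℕ → ℕ → ℕ

def kronEquiv (n₀ n₁ : ℕ) :
    Fin (2 ^ (n₀ + 1)) × Fin (2 ^ (n₁ + 1)) ≃ Fin (2 ^ (n₀ + n₁ + 1 + 1)) :=
  finProdFinEquiv.trans (finCongr (by rw [← pow_add]; congr 1; omega))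

/-- `Hilb`: the interpretation of an (evaluated) circuit of arity n+1 as an
operator on the Hilbert space of dimension 2^(n+1), given by the clauses
of Definition 9. -/
inductive HilbRel (P : QParams) :
    (n : ℕ) → Tm → Matrix (Fin (2 ^ (n + 1))) (Fin (2 ^ (n + 1))) ℂ → Prop
  | gate (u k : ℕ) : HilbRel P k (Tm.gate u k) (P.gU u k)
  | seq {n : ℕ} {C₀ C₁ : Tm} {A₀ A₁ : Matrix (Fin (2 ^ (n + 1))) (Fin (2 ^ (n + 1))) ℂ} :
      HilbRel P n C₀ A₀ → HilbRel P n C₁ A₁ →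
      HilbRel P n (seqC C₀ C₁) (A₀ * A₁)
  | par {n₀ n₁ : ℕ} {C₀ C₁ : Tm}
      {A₀ : Matrix (Fin (2 ^ (n₀ + 1))) (Fin (2 ^ (n₀ + 1))) ℂ}
      {A₁ : Matrix (Fin (2 ^ (n₁ + 1))) (Fin (2 ^ (n₁ + 1))) ℂ} :
      HilbRel P n₀ C₀ A₀ → HilbRel P n₁ C₁ A₁ →
      HilbRel P (n₀ + n₁ + 1) (parC C₀ C₁)
        (Matrix.reindex (kronEquiv n₀ n₁) (kronEquiv n₀ n₁)
          (Matrix.kroneckerMap (· * ·) A₀ A₁))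

/-- `circuitEvalRel P n x C i pr`: running the circuit `C` (of arity n+1) on the
basis state determined by `x` and totally measuring yields outcome `i` with
(nonzero) probability `pr`. -/
noncomputable def circuitEvalRel (P : QParams) (n x : ℕ) (C : Tm) (i : ℕ) (pr : ℝ) : Prop :=
  ∃ A, HilbRel P n C A ∧ ∃ hi : i < 2 ^ (n + 1),
    pr = ‖(A.mulVec fun j => if (j : ℕ) = x % 2 ^ (n + 1) then 1 else 0) ⟨i, hi⟩‖ ^ 2
    ∧ 0 < pr

/-- The big-step probabilistic operational semantics of qPCF (Table 2):
`Eval P M α V` formalizes `M ⇓^α V`. -/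
inductive Eval (P : QParams) : Tm → ℝ → Tm → Prop
  | num (n : ℕ) : Eval P (Tm.num n) 1 (Tm.num n)
  | succ {M : Tm} {n : ℕ} {α : ℝ} :
      Eval P M α (Tm.num n) → Eval P (Tm.app Tm.succOp M) α (Tm.num (n + 1))
  | pred {M : Tm} {n : ℕ} {α : ℝ} :
      Eval P M α (Tm.num (n + 1)) → Eval P (Tm.app Tm.predOp M) α (Tm.num n)
  | beta {x : ℕ} {σ : Ty} {M N V : Tm} {Ps : List Tm} {α : ℝ} :
      Eval P (apps (substTm M x N) Ps) α V →
      Eval P (apps (Tm.app (Tm.lam x σ M) N) Ps) α V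
  | ifL {M L R V : Tm} {α α' : ℝ} :
      Eval P M α (Tm.num 0) → Eval P L α' V → Eval P (ifC M L R) (α * α') V
  | ifR {M L R V : Tm} {n : ℕ} {α α' : ℝ} :
      Eval P M α (Tm.num (n + 1)) → Eval P R α' V → Eval P (ifC M L R) (α * α') V
  | fix {σ : Ty} {M V : Tm} {Ps : List Tm} {α : ℝ} :
      Eval P (apps (Tm.app M (Tm.app (Tm.fix σ) M)) Ps) α V →
      Eval P (apps (Tm.app (Tm.fix σ) M) Ps) α V
  | size {M E : Tm} {n : ℕ} {α : ℝ} :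
      Judg [] M (Ty.circ E) → Eval P E α (Tm.num n) →
      Eval P (Tm.size M) α (Tm.num n)
  | add {E₀ E₁ : Tm} {m n : ℕ} {α α' : ℝ} :
      Eval P E₀ α (Tm.num m) → Eval P E₁ α' (Tm.num n) →
      Eval P (Tm.add E₀ E₁) (α * α') (Tm.num (m + n))
  | mul {E₀ E₁ : Tm} {m n : ℕ} {α α' : ℝ} :
      Eval P E₀ α (Tm.num m) → Eval P E₁ α' (Tm.num n) →
      Eval P (Tm.mul E₀ E₁) (α * α') (Tm.num (m * n))
  | get {M N : Tm} {m n : ℕ} {α α' : ℝ} :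
      Eval P M α (Tm.num m) → Eval P N α' (Tm.num n) →
      Eval P (getC M N) (α * α') (Tm.num (m / 2 ^ n % 2))
  | set {M N : Tm} {m n m' : ℕ} {α α' : ℝ} :
      Eval P M α (Tm.num m) → Eval P N α' (Tm.num n) →
      m' / 2 ^ n % 2 = 1 → (∀ k, k ≠ n → m' / 2 ^ k % 2 = m / 2 ^ k % 2) →
      Eval P (setC M N) (α * α') (Tm.num m')
  | gate (u k : ℕ) : Eval P (Tm.gate u k) 1 (Tm.gate u k)
  | seq {M₀ M₁ C₀ C₁ : Tm} {α α' : ℝ} :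
      Eval P M₀ α C₀ → Eval P M₁ α' C₁ →
      Eval P (seqC M₀ M₁) (α * α') (seqC C₀ C₁)
  | par {M₀ M₁ C₀ C₁ : Tm} {α α' : ℝ} :
      Eval P M₀ α C₀ → Eval P M₁ α' C₁ →
      Eval P (parC M₀ M₁) (α * α') (parC C₁ C₀)
  | rev₀ {M : Tm} {u k : ℕ} {α : ℝ} :
      Eval P M α (Tm.gate u k) → Eval P (revC M) α (Tm.gate (P.adj u k) k)
  | rev₁ {M C₀ C₁ C₀' C₁' : Tm} {α α' α'' : ℝ} :
      Eval P M α (seqC C₀ C₁) → Eval P (revC C₀) α' C₀' → Eval P (revC C₁) α'' C₁' →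
      Eval P (revC M) (α * α' * α'') (seqC C₁' C₀')
  | rev₂ {M C₀ C₁ C₀' C₁' : Tm} {α α' α'' : ℝ} :
      Eval P M α (parC C₀ C₁) → Eval P (revC C₀) α' C₀' → Eval P (revC C₁) α'' C₁' →
      Eval P (revC M) (α * α' * α'') (parC C₀' C₁')
  | iter {E M₀ M₁ C₀ C₁ : Tm} {n : ℕ} {α α' α'' : ℝ} :
      Eval P E α (Tm.num n) → Eval P M₀ α' C₀ → Eval P M₁ α'' C₁ →
      Eval P (iterC E M₀ M₁) (α * α' * α'') (parN n C₁ C₀)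
  | dmeas {M N C : Tm} {m k n : ℕ} {α α' α'' : ℝ} :
      Eval P M α (Tm.num m) → Eval P N α' C →
      Judg [] N (Ty.circ (Tm.num k)) →
      circuitEvalRel P k m C n α'' →
      Eval P (dmeasC M N) (α * α' * α'') (Tm.num n)

/-- `M ⇓ V`: there exists an evaluation of `M` to `V` with some probability 0 < α ≤ 1. -/
def EvalSome (P : QParams) (M V : Tm) : Prop := ∃ α : ℝ, 0 < α ∧ α ≤ 1 ∧ Eval P M α V

end QPCF
namespace QPCF

/-- Structural depth of a type (number of arrow/Π constructors). -/
def Ty.depth : Ty → ℕ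
  | Ty.nat => 0
  | Ty.idx => 0
  | Ty.circ _ => 0
  | Ty.arrow σ τ => σ.depth + τ.depth + 1
  | Ty.pi _ σ τ => σ.depth + τ.depth + 1

theorem substTy_depth : ∀ (σ : Ty) (x : ℕ) (N : Tm), (substTy σ x N).depth = σ.depth
  | Ty.nat, _, _ => rfl
  | Ty.idx, _, _ => rfl
  | Ty.circ _, _, _ => rfl
  | Ty.arrow σ τ, x, N => by
      simp [substTy, Ty.depth, substTy_depth σ x N, substTy_depth τ x N]
  | Ty.pi y σ τ, x, N => by
      by_cases h : y = x <;>
        simp [substTy, Ty.depth, h, substTy_depth σ x N, substTy_depth τ x N]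

@[simp] theorem substBase_length (B : Base) (x : ℕ) (N : Tm) :
    (substBase B x N).length = B.length := by
  simp [substBase]

/-- The computability predicate `Comp` (Definition 7). -/
def Comp (P : QParams) : Base → Tm → Ty → Prop
  | [], M, Ty.nat => Judg [] M Ty.nat
  | [], M, Ty.idx => Judg [] M Ty.idx ∧ ∃ n, Eval P M 1 (Tm.num n)
  | [], M, Ty.circ E =>
      Judg [] M (Ty.circ E) ∧ (Judg [] E Ty.idx ∧ ∃ n, Eval P E 1 (Tm.num n))
  | [], M, Ty.arrow μ τ =>
      Judg [] M (Ty.arrow μ τ) ∧ ∀ N, Comp P [] N μ → Comp P [] (Tm.app M N) τ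
  | [], M, Ty.pi x μ τ =>
      Judg [] M (Ty.pi x μ τ) ∧
        ∀ N, Comp P [] N μ → Comp P [] (Tm.app M N) (substTy τ x N)
  | (x, ν) :: B', M, σ =>
      Judg ((x, ν) :: B') M σ ∧
        ∀ N, Comp P [] N ν →
          Comp P (substBase B' x N) (substTm M x N) (substTy σ x N)
termination_by B _ σ => (B.length, Ty.depth σ)
decreasing_by
  · exact Prod.Lex.right _ (by simp [Ty.depth] <;> omega)
  · exact Prod.Lex.right _ (by simp [Ty.depth] <;> omega)
  · exact Prod.Lex.right _ (by simp [Ty.depth] <;> omega)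
  · exact Prod.Lex.right _ (by simp [substTy_depth, Ty.depth] <;> omega)
  · exact Prod.Lex.left _ _ (by simp)
  · exact Prod.Lex.left _ _ (by simp [substBase])

end QPCF
namespace QPCF

/-- `piTelescope [(z₁,τ₁),…,(zₘ,τₘ)] γ` is `Πz₁^τ₁.…Πzₘ^τₘ.γ`. -/
def piTelescope : List (ℕ × Ty) → Ty → Ty
  | [], γ => γ
  | (z, τ) :: rest, γ => Ty.pi z τ (piTelescope rest γ)

/-- Iterated substitution on terms: `M[N₁/x₁]⋯[Nₖ/xₖ]`. -/
def substTmList : Tm → List (ℕ × Tm) → Tm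
  | M, [] => M
  | M, (x, N) :: rest => substTmList (substTm M x N) rest

/-- Iterated substitution on types: `σ[N₁/x₁]⋯[Nₖ/xₖ]`. -/
def substTyList : Ty → List (ℕ × Tm) → Ty
  | σ, [] => σ
  | σ, (x, N) :: rest => substTyList (substTy σ x N) rest

/-- Pair variables with the terms to be substituted for them. -/
def pairSub (xs : List ℕ) (Ns : List Tm) : List (ℕ × Tm) := List.zip xs Ns

/-- qPCF contexts: terms with a single hole. -/
inductive Ctx : Type
  | hole : Ctx
  | lam : ℕ → Ty → Ctx → Ctx
  | appL : Ctx → Tm → Ctx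
  | appR : Tm → Ctx → Ctx
  | addL : Ctx → Tm → Ctx
  | addR : Tm → Ctx → Ctx
  | mulL : Ctx → Tm → Ctx
  | mulR : Tm → Ctx → Ctx
  | size : Ctx → Ctx

/-- Filling the hole of a context with a term. -/
def Ctx.fill : Ctx → Tm → Tm
  | Ctx.hole, M => M
  | Ctx.lam x σ C, M => Tm.lam x σ (C.fill M)
  | Ctx.appL C N, M => Tm.app (C.fill M) N
  | Ctx.appR N C, M => Tm.app N (C.fill M)
  | Ctx.addL C N, M => Tm.add (C.fill M) N
  | Ctx.addR N C, M => Tm.add N (C.fill M)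
  | Ctx.mulL C N, M => Tm.mul (C.fill M) N
  | Ctx.mulR N C, M => Tm.mul N (C.fill M)
  | Ctx.size C, M => Tm.size (C.fill M)

-- Syntactic occurrence of a type inside a type / a term.
mutual
inductive OccTy : Ty → Ty → Prop
  | refl (t : Ty) : OccTy t t
  | circ {t : Ty} {E : Tm} : OccTm t E → OccTy t (Ty.circ E)
  | arrowL {t σ τ : Ty} : OccTy t σ → OccTy t (Ty.arrow σ τ)
  | arrowR {t σ τ : Ty} : OccTy t τ → OccTy t (Ty.arrow σ τ)
  | piL {t σ τ : Ty} {x : ℕ} : OccTy t σ → OccTy t (Ty.pi x σ τ)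
  | piR {t σ τ : Ty} {x : ℕ} : OccTy t τ → OccTy t (Ty.pi x σ τ)

inductive OccTm : Ty → Tm → Prop
  | lamTy {t : Ty} {x : ℕ} {σ : Ty} {M : Tm} : OccTy t σ → OccTm t (Tm.lam x σ M)
  | lamBody {t : Ty} {x : ℕ} {σ : Ty} {M : Tm} : OccTm t M → OccTm t (Tm.lam x σ M)
  | appL {t : Ty} {M N : Tm} : OccTm t M → OccTm t (Tm.app M N)
  | appR {t : Ty} {M N : Tm} : OccTm t N → OccTm t (Tm.app M N)
  | fix {t σ : Ty} : OccTy t σ → OccTm t (Tm.fix σ)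
  | addL {t : Ty} {M N : Tm} : OccTm t M → OccTm t (Tm.add M N)
  | addR {t : Ty} {M N : Tm} : OccTm t N → OccTm t (Tm.add M N)
  | mulL {t : Ty} {M N : Tm} : OccTm t M → OccTm t (Tm.mul M N)
  | mulR {t : Ty} {M N : Tm} : OccTm t N → OccTm t (Tm.mul M N)
  | size {t : Ty} {M : Tm} : OccTm t M → OccTm t (Tm.size M)
end

/-- A type occurs (syntactically) in a typing judgment `B ⊢ M : σ` if it occurs
in some type of the base `B`, in the subject `M`, or in the type `σ`. -/
def OccJudgment (t : Ty) (j : Base × Tm × Ty) : Prop :=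
  (∃ τ ∈ codom j.1, OccTy t τ) ∨ OccTm t j.2.1 ∨ OccTy t j.2.2

/-- `Reach B M σ (B', M', σ')` holds iff some typing derivation concluding
`B ⊢ M : σ` contains a (sub)derivation concluding `B' ⊢ M' : σ'`: it mirrors
the rules of Table 1, descending into one premise. -/
inductive Reach : Base → Tm → Ty → Base × Tm × Ty → Prop
  | here {B : Base} {M : Tm} {σ : Ty} :
      Judg B M σ → Reach B M σ (B, M, σ)
  | var {B : Base} {x : ℕ} {σ : Ty} {q : Base × Tm} {j} :
      (x, σ) ∈ B →
      (∀ p ∈ surfList B (codom B), Judg p.1 p.2 Ty.idx) →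
      q ∈ surfList B (codom B) → Reach q.1 q.2 Ty.idx j →
      Reach B (Tm.var x) σ j
  | lam {B : Base} {x : ℕ} {σ τ : Ty} {N : Tm} {j} :
      x ∉ dom B → Reach ((x, σ) :: B) N τ j →
      Reach B (Tm.lam x σ N) (Ty.pi x σ τ) j
  | appPi₁ {B : Base} {P Q : Tm} {x : ℕ} {σ τ : Ty} {j} :
      Reach B P (Ty.pi x σ τ) j → Judg B Q σ →
      Reach B (Tm.app P Q) (substTy τ x Q) j
  | appPi₂ {B : Base} {P Q : Tm} {x : ℕ} {σ τ : Ty} {j} :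
      Judg B P (Ty.pi x σ τ) → Reach B Q σ j →
      Reach B (Tm.app P Q) (substTy τ x Q) j
  | appArrow₁ {B : Base} {P Q : Tm} {σ τ : Ty} {j} :
      Reach B P (Ty.arrow σ τ) j → Judg B Q σ →
      Reach B (Tm.app P Q) τ j
  | appArrow₂ {B : Base} {P Q : Tm} {σ τ : Ty} {j} :
      Judg B P (Ty.arrow σ τ) → Reach B Q σ j →
      Reach B (Tm.app P Q) τ j
  | succ {B : Base} {q : Base × Tm} {j} :
      (∀ p ∈ surfList B (codom B), Judg p.1 p.2 Ty.idx) →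
      q ∈ surfList B (codom B) → Reach q.1 q.2 Ty.idx j →
      Reach B Tm.succOp (Ty.arrow Ty.nat Ty.nat) j
  | pred {B : Base} {q : Base × Tm} {j} :
      (∀ p ∈ surfList B (codom B), Judg p.1 p.2 Ty.idx) →
      q ∈ surfList B (codom B) → Reach q.1 q.2 Ty.idx j →
      Reach B Tm.predOp (Ty.arrow Ty.nat Ty.nat) j
  | ifNat {B : Base} {q : Base × Tm} {j} :
      (∀ p ∈ surfList B (codom B), Judg p.1 p.2 Ty.idx) →
      q ∈ surfList B (codom B) → Reach q.1 q.2 Ty.idx j →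
      Reach B Tm.ifOp (Ty.arrow Ty.nat (Ty.arrow Ty.nat (Ty.arrow Ty.nat Ty.nat))) j
  | ifCirc {B : Base} {E : Tm} {j} :
      Reach B E Ty.idx j →
      Reach B Tm.ifOp (Ty.arrow Ty.nat (Ty.arrow (Ty.circ E) (Ty.arrow (Ty.circ E) (Ty.circ E)))) j
  | fix {B : Base} {σ : Ty} {q : Base × Tm} {j} :
      YShape σ →
      (∀ p ∈ surfList B (σ :: codom B), Judg p.1 p.2 Ty.idx) →
      q ∈ surfList B (σ :: codom B) → Reach q.1 q.2 Ty.idx j →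
      Reach B (Tm.fix σ) (Ty.arrow (Ty.arrow σ σ) σ) j
  | get {B : Base} {q : Base × Tm} {j} :
      (∀ p ∈ surfList B (codom B), Judg p.1 p.2 Ty.idx) →
      q ∈ surfList B (codom B) → Reach q.1 q.2 Ty.idx j →
      Reach B Tm.getOp (Ty.arrow Ty.nat (Ty.arrow Ty.nat Ty.nat)) j
  | set {B : Base} {q : Base × Tm} {j} :
      (∀ p ∈ surfList B (codom B), Judg p.1 p.2 Ty.idx) →
      q ∈ surfList B (codom B) → Reach q.1 q.2 Ty.idx j →
      Reach B Tm.setOp (Ty.arrow Ty.nat (Ty.arrow Ty.nat Ty.nat)) j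
  | idxNat {B : Base} {M : Tm} {j} :
      Reach B M Ty.idx j → Reach B M Ty.nat j
  | num {B : Base} {n : ℕ} {q : Base × Tm} {j} :
      (∀ p ∈ surfList B (codom B), Judg p.1 p.2 Ty.idx) →
      q ∈ surfList B (codom B) → Reach q.1 q.2 Ty.idx j →
      Reach B (Tm.num n) Ty.idx j
  | add₁ {B : Base} {E₀ E₁ : Tm} {j} :
      Reach B E₀ Ty.idx j → Judg B E₁ Ty.idx → Reach B (Tm.add E₀ E₁) Ty.idx j
  | add₂ {B : Base} {E₀ E₁ : Tm} {j} :
      Judg B E₀ Ty.idx → Reach B E₁ Ty.idx j → Reach B (Tm.add E₀ E₁) Ty.idx j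
  | mul₁ {B : Base} {E₀ E₁ : Tm} {j} :
      Reach B E₀ Ty.idx j → Judg B E₁ Ty.idx → Reach B (Tm.mul E₀ E₁) Ty.idx j
  | mul₂ {B : Base} {E₀ E₁ : Tm} {j} :
      Judg B E₀ Ty.idx → Reach B E₁ Ty.idx j → Reach B (Tm.mul E₀ E₁) Ty.idx j
  | size {B : Base} {M E : Tm} {j} :
      Reach B M (Ty.circ E) j → Reach B (Tm.size M) Ty.idx j
  | gate {B : Base} {u k : ℕ} {q : Base × Tm} {j} :
      (∀ p ∈ surfList B (codom B), Judg p.1 p.2 Ty.idx) →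
      q ∈ surfList B (codom B) → Reach q.1 q.2 Ty.idx j →
      Reach B (Tm.gate u k) (Ty.circ (Tm.num k)) j
  | seqOp {B : Base} {E : Tm} {j} :
      Reach B E Ty.idx j →
      Reach B Tm.seqOp (Ty.arrow (Ty.circ E) (Ty.arrow (Ty.circ E) (Ty.circ E))) j
  | parOp₁ {B : Base} {E₀ E₁ : Tm} {j} :
      Reach B E₀ Ty.idx j → Judg B E₁ Ty.idx →
      Reach B Tm.parOp (Ty.arrow (Ty.circ E₀) (Ty.arrow (Ty.circ E₁)
        (Ty.circ (Tm.add (Tm.add E₀ E₁) (Tm.num 1))))) j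
  | parOp₂ {B : Base} {E₀ E₁ : Tm} {j} :
      Judg B E₀ Ty.idx → Reach B E₁ Ty.idx j →
      Reach B Tm.parOp (Ty.arrow (Ty.circ E₀) (Ty.arrow (Ty.circ E₁)
        (Ty.circ (Tm.add (Tm.add E₀ E₁) (Tm.num 1))))) j
  | revOp {B : Base} {E : Tm} {j} :
      Reach B E Ty.idx j →
      Reach B Tm.revOp (Ty.arrow (Ty.circ E) (Ty.circ E)) j
  | iterOp₁ {B : Base} {E₀ E₁ : Tm} {x : ℕ} {j} :
      Reach B E₀ Ty.idx j → Judg B E₁ Ty.idx →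
      x ∉ dom B → x ∉ freeTm E₀ → x ∉ freeTm E₁ →
      Reach B Tm.iterOp (Ty.pi x Ty.idx (Ty.arrow (Ty.circ E₀) (Ty.arrow (Ty.circ E₁)
        (Ty.circ (Tm.add E₀ (Tm.mul (Tm.add (Tm.num 1) E₁) (Tm.var x))))))) j
  | iterOp₂ {B : Base} {E₀ E₁ : Tm} {x : ℕ} {j} :
      Judg B E₀ Ty.idx → Reach B E₁ Ty.idx j →
      x ∉ dom B → x ∉ freeTm E₀ → x ∉ freeTm E₁ →
      Reach B Tm.iterOp (Ty.pi x Ty.idx (Ty.arrow (Ty.circ E₀) (Ty.arrow (Ty.circ E₁)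
        (Ty.circ (Tm.add E₀ (Tm.mul (Tm.add (Tm.num 1) E₁) (Tm.var x))))))) j
  | dmeas {B : Base} {E : Tm} {j} :
      Reach B E Ty.idx j →
      Reach B Tm.dmeasOp (Ty.arrow Ty.nat (Ty.arrow (Ty.circ E) Ty.nat)) j

end QPCF

/-!
Erase qPCF types to simple types ("skeletons"): Π becomes →, and the index expressions inside
`Circ` types are forgotten. Skeleton typing of closed terms is preserved by the head β-steps and
fixpoint unfoldings of the big-step semantics, because skeletons are unaffected by substitution.
Every other rule of the semantics either yields a numeral or evaluates an application spine
headed by `if`, a gate or a circuit operator, and none of their skeletons ends in `Idx`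
(`Idx ≤ Nat` only coerces towards `Nat`). So a closed term of skeleton `Idx` can only evaluate
to a numeral.
-/

namespace QPCF

inductive STy : Type
  | nat | idx | circ
  | arr : STy → STy → STy

/-- The final codomain `γ` of `s₁ → ⋯ → sₙ → γ`. -/
def STy.target : STy → STy
  | .arr _ t => t.target
  | t => t

inductive STy.Sub : STy → STy → Prop
  | refl (t : STy) : STy.Sub t t
  | idxNat : STy.Sub .idx .nat

def Ty.skeleton : Ty → STy
  | Ty.nat => .nat
  | Ty.idx => .idx
  | Ty.circ _ => .circ
  | Ty.arrow σ τ => .arr σ.skeleton τ.skeleton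
  | Ty.pi _ σ τ => .arr σ.skeleton τ.skeleton

theorem Ty.skeleton_substTy :
    ∀ (σ : Ty) (x : ℕ) (N : Tm), (substTy σ x N).skeleton = σ.skeleton
  | Ty.nat, _, _ | Ty.idx, _, _ | Ty.circ _, _, _ => rfl
  | Ty.arrow σ τ, x, N => by
      simp only [substTy, Ty.skeleton, Ty.skeleton_substTy σ x N, Ty.skeleton_substTy τ x N]
  | Ty.pi y σ τ, x, N => by
      by_cases h : y = x <;>
        simp only [substTy, Ty.skeleton, h, if_true, if_false, Ty.skeleton_substTy σ x N,
          Ty.skeleton_substTy τ x N]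

/-- The index operations are typed without looking at their arguments: evaluating them can
only produce a numeral anyway. -/
inductive ConstTy : Tm → STy → Prop
  | succ : ConstTy .succOp (.arr .nat .nat)
  | pred : ConstTy .predOp (.arr .nat .nat)
  | ifNat : ConstTy .ifOp (.arr .nat (.arr .nat (.arr .nat .nat)))
  | ifCirc : ConstTy .ifOp (.arr .nat (.arr .circ (.arr .circ .circ)))
  | fix (σ : Ty) : ConstTy (.fix σ) (.arr (.arr σ.skeleton σ.skeleton) σ.skeleton)
  | get : ConstTy .getOp (.arr .nat (.arr .nat .nat))
  | set : ConstTy .setOp (.arr .nat (.arr .nat .nat))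
  | num (n : ℕ) : ConstTy (.num n) .idx
  | add (E₀ E₁ : Tm) : ConstTy (.add E₀ E₁) .idx
  | mul (E₀ E₁ : Tm) : ConstTy (.mul E₀ E₁) .idx
  | size (M : Tm) : ConstTy (.size M) .idx
  | gate (u k : ℕ) : ConstTy (.gate u k) .circ
  | seqOp : ConstTy .seqOp (.arr .circ (.arr .circ .circ))
  | parOp : ConstTy .parOp (.arr .circ (.arr .circ .circ))
  | revOp : ConstTy .revOp (.arr .circ .circ)
  | iterOp : ConstTy .iterOp (.arr .idx (.arr .circ (.arr .circ .circ)))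
  | dmeas : ConstTy .dmeasOp (.arr .nat (.arr .circ .nat))

theorem ConstTy.substTm {c : Tm} {t : STy} (h : ConstTy c t) (x : ℕ) (N : Tm) :
    ConstTy (substTm c x N) t := by
  cases h with
  | fix σ => simpa only [QPCF.substTm, Ty.skeleton_substTy] using ConstTy.fix (substTy σ x N)
  | _ => simp only [QPCF.substTm]; constructor

abbrev SCtx := ℕ → Option STy

/-- `Judg` on skeletons, without its freshness and `surf` side conditions. -/
inductive SJudg : SCtx → Tm → STy → Prop
  | var {Γ : SCtx} {x : ℕ} {t : STy} : Γ x = some t → SJudg Γ (.var x) t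
  | lam {Γ : SCtx} {x : ℕ} {σ : Ty} {M : Tm} {t : STy} :
      SJudg (Function.update Γ x (some σ.skeleton)) M t →
      SJudg Γ (.lam x σ M) (.arr σ.skeleton t)
  | app {Γ : SCtx} {P Q : Tm} {s t : STy} :
      SJudg Γ P (.arr s t) → SJudg Γ Q s → SJudg Γ (.app P Q) t
  | const {Γ : SCtx} {c : Tm} {t : STy} : ConstTy c t → SJudg Γ c t
  | idxNat {Γ : SCtx} {M : Tm} : SJudg Γ M .idx → SJudg Γ M .nat

def Tm.head : Tm → Tm
  | .app P _ => P.head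
  | M => M

namespace SJudg

theorem mono {Γ : SCtx} {M : Tm} {t : STy} (h : SJudg Γ M t) :
    ∀ {Δ : SCtx}, (∀ y s, Γ y = some s → Δ y = some s) → SJudg Δ M t := by
  induction h with
  | var hx => exact fun hΓΔ => var (hΓΔ _ _ hx)
  | @lam Γ x σ M t _ ih =>
      intro Δ hΓΔ
      refine lam (ih fun y s hy => ?_)
      rcases eq_or_ne y x with rfl | hyx
      · simpa using hy
      · rw [Function.update_of_ne hyx] at hy ⊢
        exact hΓΔ y s hy
  | app _ _ ihP ihQ => exact fun hΓΔ => app (ihP hΓΔ) (ihQ hΓΔ)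
  | const hc => exact fun _ => const hc
  | idxNat _ ih => exact fun hΓΔ => idxNat (ih hΓΔ)

theorem substTm {N : Tm} {s : STy} (hN : SJudg (fun _ => none) N s) {Γ : SCtx} {M : Tm}
    {t : STy} (h : SJudg Γ M t) :
    ∀ {x : ℕ} {Δ : SCtx}, Γ x = some s → (∀ y, y ≠ x → Γ y = Δ y) →
      SJudg Δ (QPCF.substTm M x N) t := by
  induction h with
  | @var Γ y t hy =>
      intro x Δ hx hΓΔ
      rcases eq_or_ne y x with rfl | hyx
      · obtain rfl : t = s := Option.some_injective _ (hy.symm.trans hx)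
        simpa [QPCF.substTm] using hN.mono (by simp)
      · simpa [QPCF.substTm, hyx] using var ((hΓΔ y hyx).symm.trans hy)
  | @lam Γ y σ M t hM ih =>
      intro x Δ hx hΓΔ
      have hΓΔ' : ∀ z, z ≠ x → Function.update Γ y (some σ.skeleton) z =
          Function.update Δ y (some σ.skeleton) z := by
        intro z hzx
        rcases eq_or_ne z y with rfl | hzy
        · simp
        · simp [Function.update_of_ne hzy, hΓΔ z hzx]
      have hlam : ∀ {M'}, SJudg (Function.update Δ y (some σ.skeleton)) M' t →
          SJudg Δ (.lam y (substTy σ x N) M') (.arr σ.skeleton t) := fun h => by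
        rw [← Ty.skeleton_substTy σ x N] at h ⊢
        exact lam h
      simp only [QPCF.substTm]
      split_ifs with hyx
      · subst hyx
        refine hlam (hM.mono fun z r hz => ?_)
        rcases eq_or_ne z y with rfl | hzy
        · simpa using hz
        · rwa [← hΓΔ' z hzy]
      · exact hlam (ih (by simpa [Function.update_of_ne (Ne.symm hyx)] using hx) hΓΔ')
  | app _ _ ihP ihQ =>
      exact fun hx hΓΔ => app (ihP hx hΓΔ) (ihQ hx hΓΔ)
  | const hc => exact fun _ _ => const (hc.substTm _ _)
  | idxNat _ ih => exact fun hx hΓΔ => idxNat (ih hx hΓΔ)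

theorem sub {Γ : SCtx} {M : Tm} {t t' : STy} (h : SJudg Γ M t) (htt' : t.Sub t') :
    SJudg Γ M t' := by
  cases htt'
  · exact h
  · exact idxNat h

theorem app_inv {Γ : SCtx} {P Q : Tm} {t : STy} (h : SJudg Γ (.app P Q) t) :
    ∃ s t', SJudg Γ P (.arr s t') ∧ SJudg Γ Q s ∧ t'.Sub t := by
  generalize hR : Tm.app P Q = R at h
  induction h with
  | app hP hQ => cases hR; exact ⟨_, _, hP, hQ, .refl _⟩
  | idxNat _ ih =>
      obtain ⟨s, t', hP, hQ, ht'⟩ := ih hR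
      cases ht'
      exact ⟨s, _, hP, hQ, .idxNat⟩
  | var | lam => cases hR
  | const hc => subst hR; cases hc

theorem lam_inv {Γ : SCtx} {x : ℕ} {σ : Ty} {M : Tm} {u : STy} (h : SJudg Γ (.lam x σ M) u) :
    ∃ t, u = .arr σ.skeleton t ∧ SJudg (Function.update Γ x (some σ.skeleton)) M t := by
  generalize hR : Tm.lam x σ M = R at h
  induction h with
  | lam hM => cases hR; exact ⟨_, rfl, hM⟩
  | idxNat _ ih => obtain ⟨_, h, _⟩ := ih hR; cases h
  | var | app => cases hR
  | const hc => subst hR; cases hc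

theorem fix_inv {Γ : SCtx} {σ : Ty} {u : STy} (h : SJudg Γ (.fix σ) u) :
    u = .arr (.arr σ.skeleton σ.skeleton) σ.skeleton := by
  cases h with
  | const hc => cases hc; rfl
  | idxNat h => cases h with | const hc => cases hc

theorem substTm_of_app_lam {x : ℕ} {σ : Ty} {M N : Tm} {u : STy}
    (h : SJudg (fun _ => none) (.app (.lam x σ M) N) u) :
    SJudg (fun _ => none) (QPCF.substTm M x N) u := by
  obtain ⟨s, t, hlam, hN, htu⟩ := h.app_inv
  obtain ⟨t', hEq, hM⟩ := hlam.lam_inv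
  cases hEq
  exact (hN.substTm hM (by simp) fun y hyx => by simp [Function.update_of_ne hyx]).sub htu

theorem unfold_of_app_fix {Γ : SCtx} {σ : Ty} {F : Tm} {u : STy}
    (h : SJudg Γ (.app (.fix σ) F) u) : SJudg Γ (.app F (.app (.fix σ) F)) u := by
  obtain ⟨s, t, hfix, hF, htu⟩ := h.app_inv
  cases hfix.fix_inv
  exact (app hF (app hfix hF)).sub htu

theorem apps_of_head {Γ : SCtx} {t : STy} :
    ∀ {Ps : List Tm} {H H' : Tm}, (∀ u, SJudg Γ H u → SJudg Γ H' u) →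
      SJudg Γ (apps H Ps) t → SJudg Γ (apps H' Ps) t
  | [], _, _, hH => hH t
  | Q :: _, H, H', hH => apps_of_head (H := .app H Q) (H' := .app H' Q) fun u hu => by
      obtain ⟨s, t', hP, hQ, htu⟩ := hu.app_inv
      exact (app (hH _ hP) hQ).sub htu

theorem head_target_idx {Γ : SCtx} {M : Tm} {t : STy} (h : SJudg Γ M t)
    (ht : t.target = .idx) : ∃ u, SJudg Γ M.head u ∧ u.target = .idx := by
  induction h with
  | var hx => exact ⟨_, var hx, ht⟩
  | lam hM => exact ⟨_, lam hM, ht⟩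
  | app _ _ ihP => exact ihP ht
  | const hc => cases hc <;> exact ⟨_, const (by constructor), ht⟩
  | idxNat => cases ht

end SJudg

def skeletonCtx : Base → SCtx
  | [] => fun _ => none
  | (x, σ) :: B => Function.update (skeletonCtx B) x (some σ.skeleton)

theorem skeletonCtx_of_mem {x : ℕ} {σ : Ty} :
    ∀ {B : Base}, (dom B).Nodup → (x, σ) ∈ B → skeletonCtx B x = some σ.skeleton
  | (y, τ) :: B, hB, hmem => by
      simp only [dom, List.map_cons, List.nodup_cons] at hB
      rcases List.mem_cons.mp hmem with h | h
      · cases h; simp [skeletonCtx]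
      · have hxy : x ≠ y := by
          rintro rfl
          exact hB.1 (List.mem_map.mpr ⟨_, h, rfl⟩)
        simpa [skeletonCtx, Function.update_of_ne hxy] using skeletonCtx_of_mem hB.2 h

theorem Judg.skeleton {B : Base} {M : Tm} {τ : Ty} (h : Judg B M τ) (hB : (dom B).Nodup) :
    SJudg (skeletonCtx B) M τ.skeleton := by
  induction h with
  | var hmem => exact .var (skeletonCtx_of_mem hB hmem)
  | lam hx _ ih => exact .lam (ih (List.nodup_cons.mpr ⟨hx, hB⟩))
  | appPi _ _ ihP ihQ =>
      rw [Ty.skeleton_substTy]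
      exact .app (ihP hB) (ihQ hB)
  | appArrow _ _ ihP ihQ => exact .app (ihP hB) (ihQ hB)
  | idxNat _ ih => exact .idxNat (ih hB)
  | _ => exact .const (by constructor)

theorem Eval.exists_num_of_sjudg_idx {P : QParams} {M V : Tm} {α : ℝ} (he : Eval P M α V)
    (hM : SJudg (fun _ => none) M .idx) : ∃ n, V = .num n := by
  induction he with
  | beta _ ih => exact ih (SJudg.apps_of_head (fun _ => SJudg.substTm_of_app_lam) hM)
  | fix _ ih => exact ih (SJudg.apps_of_head (fun _ => SJudg.unfold_of_app_fix) hM)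
  | ifL | ifR | gate | seq | par | rev₀ | rev₁ | rev₂ | iter =>
      obtain ⟨u, hu, hidx⟩ := hM.head_target_idx rfl
      cases hu with
      | const hc => cases hc <;> cases hidx
      | idxNat => cases hidx
  | _ => exact ⟨_, rfl⟩

/-- Corollary 2, Progress at Idx: if ⊢ M : Idx and M ⇓¹ N
then N is a numeral. -/
theorem idx_progress (P : QParams) (M N : Tm)
    (h : Judg [] M Ty.idx) (he : Eval P M 1 N) : ∃ n : ℕ, N = Tm.num n :=
  he.exists_num_of_sjudg_idx (h.skeleton List.nodup_nil)

end QPCF
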